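/- Fix ℓ ∈ ℕ₀ and d = (d_1,…,d_ℓ), r = (r_1,…,r_ℓ) ∈ ℕ^ℓ with d_1 = n, and set m_ℓ := Σ_{k=1}^ℓ (r_k − 1)·∏_{i=k+1}^ℓ d_i. Then N_n(ℓ,d,r) ⊆ MAX_n(m_ℓ + 1), i.e., every function computable by an indegree-d-constrained rank-r maxout network with ℓ hidden layers is a finite real linear combination of maxima of at most m_ℓ + 1 linear functions. -/

import Mathlib

open Pointwise

noncomputable section SparseMaxout

/-- Vectors in `ℝ^n`. -/
abbrev Vec (n : ℕ) := Fin n → ℝ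

/-- A polytope is the convex hull of a finite nonempty set of points. -/
def IsPolytope {n : ℕ} (P : Set (Vec n)) : Prop :=
  ∃ s : Finset (Vec n), s.Nonempty ∧ P = convexHull ℝ (s : Set (Vec n))

/-- A simplex is the convex hull of a finite nonempty affinely independent set of points. -/
def IsSimplex {n : ℕ} (S : Set (Vec n)) : Prop :=
  ∃ (k : ℕ) (pts : Fin k → Vec n), 0 < k ∧ AffineIndependent ℝ pts ∧
    S = convexHull ℝ (Set.range pts)

/-- The support function `f_P(x) = max_{a ∈ P} ⟨a, x⟩` of a set `P`. -/
def suppFn {n : ℕ} (P : Set (Vec n)) (x : Vec n) : ℝ :=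
  sSup ((fun a => ∑ i, a i * x i) '' P)

/-- The dimension of a polytope: the dimension of its affine hull. -/
def polyDim {n : ℕ} (P : Set (Vec n)) : ℕ :=
  Module.finrank ℝ (affineSpan ℝ P).direction

/-- A (representative of a) virtual polytope: a pair `(P, Q)` standing for `P - Q`. -/
abbrev VP (n : ℕ) := Set (Vec n) × Set (Vec n)

/-- Two pairs represent the same virtual polytope: `P₁ - Q₁ = P₂ - Q₂` iff
`P₁ + Q₂ = P₂ + Q₁` (Minkowski sums). -/
def vEquiv {n : ℕ} (A B : VP n) : Prop :=
  A.1 + B.2 = B.1 + A.2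

/-- Both components are polytopes. -/
def IsPolyPair {n : ℕ} (A : VP n) : Prop :=
  IsPolytope A.1 ∧ IsPolytope A.2

/-- Scalar multiple of a virtual polytope: `λ(P - Q) := λP - λQ`. -/
def vSMul {n : ℕ} (c : ℝ) (A : VP n) : VP n := (c • A.1, c • A.2)

/-- Convex hull of finitely many virtual polytopes:
`conv(P₁-Q₁, …, P_m-Q_m) := conv(⋃ᵢ (Pᵢ + Σ_{k≠i} Q_k)) - Σ_k Q_k`. -/
def vConv {n m : ℕ} (V : Fin m → VP n) : VP n :=
  (convexHull ℝ (⋃ i, ((V i).1 + ∑ k ∈ Finset.univ.erase i, (V k).2)),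
   ∑ k, (V k).2)

/-- The dimension of a virtual polytope: `min{dim(A + B) : V = A - B}` over
polytope representations. -/
def vDim {n : ℕ} (V : VP n) : ℕ :=
  sInf {m | ∃ A B : Set (Vec n), IsPolytope A ∧ IsPolytope B ∧
    vEquiv (A, B) V ∧ polyDim (A + B) = m}

/-- Support function of a virtual polytope: `f_{P-Q} := f_P - f_Q`. -/
def vSuppFn {n : ℕ} (V : VP n) (x : Vec n) : ℝ :=
  suppFn V.1 x - suppFn V.2 x

/-- The recursively defined classes `Q̂_ℓ` of virtual polytopes dual to sparse maxout
networks with indegree constraints `d` and ranks `r` (layer `k` uses `d k`, `r k`);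
membership is up to equality of virtual polytopes. -/
def Qhat (n : ℕ) (d r : ℕ → ℕ) : ℕ → Set (VP n)
  | 0 => {V | IsPolyPair V ∧ ∃ v : Vec n, vEquiv V ({v}, {0})}
  | (k+1) => {V | IsPolyPair V ∧
      ∃ (α : Fin (r (k+1)) → Fin (d (k+1)) → ℝ) (W : Fin (d (k+1)) → VP n),
        (∀ j, W j ∈ Qhat n d r k) ∧
        vEquiv V (vConv (fun i => ∑ j, vSMul (α i j) (W j)))}

/-- `Q_n(ℓ,d,r)`: finite real linear combinations of elements of `Q̂_ℓ`. -/
def Qfull (n : ℕ) (d r : ℕ → ℕ) (ℓ : ℕ) : Set (VP n) :=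
  {V | IsPolyPair V ∧ ∃ (p : ℕ) (c : Fin p → ℝ) (W : Fin p → VP n),
    (∀ i, W i ∈ Qhat n d r ℓ) ∧ vEquiv V (∑ i, vSMul (c i) (W i))}

/-- `m_ℓ = Σ_{k=1}^ℓ (r_k - 1) ∏_{i=k+1}^ℓ d_i`. -/
def mval (d r : ℕ → ℕ) (ℓ : ℕ) : ℕ :=
  ∑ k ∈ Finset.Icc 1 ℓ, (r k - 1) * ∏ i ∈ Finset.Icc (k+1) ℓ, d i

/-- The recursively defined classes `N̂_ℓ` of functions computed by a single output
neuron of an indegree-`d`-constrained rank-`r` maxout network with `ℓ` hidden layers. -/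
def Nhat (n : ℕ) (d r : ℕ → ℕ) : ℕ → Set ((Vec n) → ℝ)
  | 0 => {f | ∃ v : Vec n, f = fun x => ∑ i, v i * x i}
  | (k+1) => {f | ∃ (α : Fin (r (k+1)) → Fin (d (k+1)) → ℝ)
      (g : Fin (d (k+1)) → (Vec n) → ℝ),
      (∀ j, g j ∈ Nhat n d r k) ∧
      f = fun x => ⨆ i, ∑ j, α i j * g j x}

/-- `N_n(ℓ,d,r)`: finite real linear combinations of functions in `N̂_ℓ`. -/
def Nfull (n : ℕ) (d r : ℕ → ℕ) (ℓ : ℕ) : Set ((Vec n) → ℝ) :=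
  {f | ∃ (p : ℕ) (c : Fin p → ℝ) (g : Fin p → (Vec n) → ℝ),
    (∀ i, g i ∈ Nhat n d r ℓ) ∧ f = fun x => ∑ i, c i * g i x}

/-- Unconstrained single-neuron classes `N̂_ℓ` (no indegree constraint). -/
def NhatU (n : ℕ) (r : ℕ → ℕ) : ℕ → Set ((Vec n) → ℝ)
  | 0 => {f | ∃ v : Vec n, f = fun x => ∑ i, v i * x i}
  | (k+1) => {f | ∃ (m : ℕ) (α : Fin (r (k+1)) → Fin m → ℝ)
      (g : Fin m → (Vec n) → ℝ),
      (∀ j, g j ∈ NhatU n r k) ∧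
      f = fun x => ⨆ i, ∑ j, α i j * g j x}

/-- `N_n(ℓ,r)`: finite real linear combinations of functions in the unconstrained `N̂_ℓ`. -/
def NfullU (n : ℕ) (r : ℕ → ℕ) (ℓ : ℕ) : Set ((Vec n) → ℝ) :=
  {f | ∃ (p : ℕ) (c : Fin p → ℝ) (g : Fin p → (Vec n) → ℝ),
    (∀ i, g i ∈ NhatU n r ℓ) ∧ f = fun x => ∑ i, c i * g i x}

/-- `MAX_n(m)`: finite real linear combinations of maxima of at most `m` linear functions. -/
def MAXn (n m : ℕ) : Set ((Vec n) → ℝ) :=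
  {f | ∃ (p : ℕ) (β : Fin p → ℝ) (a : Fin p → Fin m → Vec n),
    f = fun x => ∑ i, β i * ⨆ j, ∑ t, a i j t * x t}

/-!
Each neuron of the network computes a difference `f_P - f_Q` of support functions of finite point
sets `P, Q` whose affine spans are parallel to a common subspace `U`. For fixed `U` these functions
form a vector space, and a rank-`r` maxout unit applied to them only enlarges `U` by `r - 1`
dimensions: after rewriting all inputs with one common subtrahend `f_Q`, the maximum of the
`f_{P_i} - f_Q` is `f_{⋃ P_i} - f_Q`. Inductively `dim U ≤ m_ℓ`.

It remains to see that the support function of a finite set `S` with affine span of dimension `m`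
is a combination of maxima of `m + 1` linear functions. If `S` has more than `m + 1` points, then by
Radon's theorem it splits as `I ⊔ J` with `min_I ⟨·, x⟩ ≤ max_J ⟨·, x⟩` for every `x`, and
inclusion–exclusion over the subsets of `I` writes `f_S` as a signed sum of the `f_{A ∪ J}` with
`A ⊊ I`, which have fewer points.
-/

open Module Matrix

section VectorSpan

variable {k E : Type*} [Ring k] [AddCommGroup E] [Module k E]

theorem vectorSpan_add_le (s t : Set E) :
    vectorSpan k (s + t) ≤ vectorSpan k s ⊔ vectorSpan k t := by
  rw [vectorSpan_def, Submodule.span_le]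
  rintro _ ⟨_, ⟨a, ha, b, hb, rfl⟩, _, ⟨a', ha', b', hb', rfl⟩, rfl⟩
  dsimp only
  rw [vsub_eq_sub, add_sub_add_comm]
  exact Submodule.add_mem_sup (vsub_mem_vectorSpan k ha ha') (vsub_mem_vectorSpan k hb hb')

theorem vectorSpan_smul_le (c : k) (s : Set E) : vectorSpan k (c • s) ≤ vectorSpan k s := by
  rw [vectorSpan_def, Submodule.span_le]
  rintro _ ⟨_, ⟨a, ha, rfl⟩, _, ⟨b, hb, rfl⟩, rfl⟩
  dsimp only
  rw [vsub_eq_sub, ← smul_sub]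
  exact Submodule.smul_mem _ c (vsub_mem_vectorSpan k ha hb)

theorem vectorSpan_iUnion_le {ι : Type*} {s : ι → Set E} {U : Submodule k E}
    (hs : ∀ i, vectorSpan k (s i) ≤ U) {b : ι → E} (hb : ∀ i, b i ∈ s i) :
    vectorSpan k (⋃ i, s i) ≤ U ⊔ vectorSpan k (Set.range b) := by
  rw [vectorSpan_def, Submodule.span_le]
  rintro _ ⟨p, hp, q, hq, rfl⟩
  obtain ⟨i, hpi⟩ := Set.mem_iUnion.1 hp
  obtain ⟨j, hqj⟩ := Set.mem_iUnion.1 hq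
  have hsplit : p -ᵥ q = ((p -ᵥ b i) + (b j -ᵥ q)) + (b i -ᵥ b j) := by
    simp only [vsub_eq_sub]
    abel
  dsimp only
  rw [SetLike.mem_coe, hsplit]
  exact Submodule.add_mem_sup
    (U.add_mem (hs i (vsub_mem_vectorSpan k hpi (hb i))) (hs j (vsub_mem_vectorSpan k (hb j) hqj)))
    (vsub_mem_vectorSpan k (Set.mem_range_self i) (Set.mem_range_self j))

end VectorSpan

theorem Submodule.finrank_iSup_le_sum {K V ι : Type*} [DivisionRing K] [AddCommGroup V]
    [Module K V] [FiniteDimensional K V] [Fintype ι] (U : ι → Submodule K V) :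
    finrank K ↥(⨆ i, U i) ≤ ∑ i, finrank K (U i) := by
  classical
  suffices ∀ s : Finset ι, finrank K ↥(⨆ i ∈ s, U i) ≤ ∑ i ∈ s, finrank K (U i) from
    (Submodule.finrank_mono (by simp)).trans (this Finset.univ)
  intro s
  induction s using Finset.induction_on with
  | empty => simp
  | insert i s hi ih =>
    rw [Finset.iSup_insert, Finset.sum_insert hi]
    exact (Submodule.finrank_add_le_finrank_add_finrank _ _).trans (by omega)

theorem Finset.exists_convexHull_inter_convexHull_sdiff_nonempty {𝕜 E : Type*} [Field 𝕜]
    [LinearOrder 𝕜] [IsStrictOrderedRing 𝕜] [AddCommGroup E] [Module 𝕜 E] [DecidableEq E]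
    {S : Finset E} (h : ¬ AffineIndependent 𝕜 ((↑) : S → E)) :
    ∃ I ⊆ S, (convexHull 𝕜 (I : Set E) ∩ convexHull 𝕜 ↑(S \ I)).Nonempty := by
  classical
  obtain ⟨I, hI⟩ := Convex.radon_partition h
  refine ⟨I.toFinset.map (Function.Embedding.subtype _), fun p hp => ?_, ?_⟩
  · obtain ⟨q, -, rfl⟩ := Finset.mem_map.1 hp
    exact q.2
  · convert hI using 3
    · simp
    · ext p
      aesop

def maxSubmodule (n m : ℕ) : Submodule ℝ (Vec n → ℝ) where
  carrier := MAXn n m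
  zero_mem' := ⟨0, Fin.elim0, Fin.elim0, by funext x; simp⟩
  add_mem' := by
    rintro _ _ ⟨p, β, a, rfl⟩ ⟨q, γ, b, rfl⟩
    refine ⟨p + q, Fin.append β γ, Fin.append a b, ?_⟩
    ext x
    simp [Fin.sum_univ_add]
  smul_mem' := by
    rintro c _ ⟨p, β, a, rfl⟩
    refine ⟨p, c • β, a, ?_⟩
    ext x
    simp [Finset.mul_sum, mul_assoc]

variable {n : ℕ}

theorem suppFn_apply (A : Set (Vec n)) (x : Vec n) : suppFn A x = sSup ((· ⬝ᵥ x) '' A) := rfl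

theorem le_suppFn {A : Set (Vec n)} (hA : A.Finite) {a : Vec n} (ha : a ∈ A) (x : Vec n) :
    a ⬝ᵥ x ≤ suppFn A x :=
  le_csSup (hA.image _).bddAbove (Set.mem_image_of_mem _ ha)

theorem suppFn_singleton (a : Vec n) : suppFn {a} = (a ⬝ᵥ ·) := by
  ext x
  simp [suppFn_apply]

theorem suppFn_insert_of_le {A : Set (Vec n)} (hA : A.Finite) (hA₀ : A.Nonempty) {a x : Vec n}
    (h : a ⬝ᵥ x ≤ suppFn A x) : suppFn (insert a A) x = suppFn A x := by
  rw [suppFn_apply, Set.image_insert_eq, csSup_insert (hA.image _).bddAbove (hA₀.image _)]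
  exact max_eq_right h

theorem suppFn_add {A B : Set (Vec n)} (hA : A.Finite) (hA₀ : A.Nonempty) (hB : B.Finite)
    (hB₀ : B.Nonempty) : suppFn (A + B) = suppFn A + suppFn B := by
  ext x
  have himage : (· ⬝ᵥ x) '' (A + B) = (· ⬝ᵥ x) '' A + (· ⬝ᵥ x) '' B :=
    Set.image_image2_distrib fun a b => add_dotProduct a b x
  rw [Pi.add_apply, suppFn_apply, himage, csSup_add (hA₀.image _) (hA.image _).bddAbove
    (hB₀.image _) (hB.image _).bddAbove]
  rfl

theorem suppFn_smul {c : ℝ} (hc : 0 ≤ c) (A : Set (Vec n)) :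
    suppFn (c • A) = c • suppFn A := by
  ext x
  have himage : (· ⬝ᵥ x) '' (c • A) = c • (· ⬝ᵥ x) '' A :=
    Set.image_comm fun a => smul_dotProduct c a x
  rw [Pi.smul_apply, suppFn_apply, himage, Real.sSup_smul_of_nonneg hc]
  rfl

theorem suppFn_iUnion {ι : Type*} [Finite ι] [Nonempty ι] {A : ι → Set (Vec n)}
    (hA : ∀ i, (A i).Finite) (hA₀ : ∀ i, (A i).Nonempty) (x : Vec n) :
    suppFn (⋃ i, A i) x = ⨆ i, suppFn (A i) x := by
  have hbdd : BddAbove (Set.range fun i => suppFn (A i) x) := (Set.finite_range _).bddAbove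
  apply le_antisymm
  · refine csSup_le ((Set.nonempty_iUnion.2 ⟨Classical.arbitrary ι, hA₀ _⟩).image _) ?_
    rintro _ ⟨a, ha, rfl⟩
    obtain ⟨i, hai⟩ := Set.mem_iUnion.1 ha
    exact (le_suppFn (hA i) hai x).trans (le_ciSup hbdd i)
  · refine ciSup_le fun i => csSup_le_csSup ?_ ((hA₀ i).image _)
      (Set.image_mono (Set.subset_iUnion A i))
    exact ((Set.finite_iUnion hA).image _).bddAbove

theorem suppFn_range_mem_MAXn {m : ℕ} (a : Fin m → Vec n) :
    suppFn (Set.range a) ∈ MAXn n m := by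
  refine ⟨1, fun _ => 1, fun _ => a, ?_⟩
  ext x
  simp only [Finset.univ_unique, Finset.sum_singleton, one_mul, suppFn_apply, ← Set.range_comp]
  rfl

theorem suppFn_mem_MAXn_of_card_le {m : ℕ} (S : Finset (Vec n)) (hS : S.card ≤ m) :
    suppFn ↑S ∈ MAXn n m := by
  rcases S.eq_empty_or_nonempty with rfl | hS₀
  · have h : suppFn (∅ : Set (Vec n)) = 0 := by
      ext x
      simp [suppFn_apply]
    rw [Finset.coe_empty, h]
    exact (maxSubmodule n m).zero_mem
  · have : Nonempty (Fin S.card) := ⟨⟨0, hS₀.card_pos⟩⟩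
    have he := S.equivFin.symm.surjective.comp
      (Function.invFun_surjective (Fin.castLE_injective hS))
    have hrange : Set.range (Subtype.val ∘ S.equivFin.symm ∘
        Function.invFun (Fin.castLE hS)) = ↑S := by
      rw [he.range_comp, Subtype.range_coe]
    rw [← hrange]
    exact suppFn_range_mem_MAXn _

theorem exists_dotProduct_le_of_convexHull_inter_nonempty {I J : Set (Vec n)}
    (h : (convexHull ℝ I ∩ convexHull ℝ J).Nonempty) (x : Vec n) :
    ∃ p ∈ I, ∃ q ∈ J, p ⬝ᵥ x ≤ q ⬝ᵥ x := by
  obtain ⟨z, hzI, hzJ⟩ := h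
  let f : Vec n →ₗ[ℝ] ℝ := (dotProductBilin ℝ ℝ).flip x
  obtain ⟨p, hp, hpz⟩ :=
    (f.concaveOn convex_univ).exists_le_of_mem_convexHull (Set.subset_univ _) hzI
  obtain ⟨q, hq, hzq⟩ :=
    (f.convexOn convex_univ).exists_ge_of_mem_convexHull (Set.subset_univ _) hzJ
  exact ⟨p, hp, q, hq, hpz.trans hzq⟩

theorem sum_powerset_neg_one_pow_mul_suppFn_union_eq_zero [DecidableEq (Vec n)]
    {I J : Finset (Vec n)} {p q x : Vec n} (hp : p ∈ I) (hq : q ∈ J)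
    (hpq : p ⬝ᵥ x ≤ q ⬝ᵥ x) :
    ∑ A ∈ I.powerset, (-1 : ℝ) ^ A.card * suppFn ↑(A ∪ J) x = 0 := by
  have hinsert : ∀ A : Finset (Vec n),
      suppFn ↑(insert p A ∪ J) x = suppFn ↑(A ∪ J) x := by
    intro A
    have hqA : q ∈ A ∪ J := Finset.mem_union_right A hq
    rw [Finset.insert_union, Finset.coe_insert]
    exact suppFn_insert_of_le (Finset.finite_toSet _) ⟨q, hqA⟩
      (hpq.trans (le_suppFn (Finset.finite_toSet _) hqA x))
  rw [← Finset.insert_erase hp, Finset.sum_powerset_insert (Finset.notMem_erase p I),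
    ← Finset.sum_add_distrib]
  refine Finset.sum_eq_zero fun A hA => ?_
  have hpA : p ∉ A := fun h => Finset.notMem_erase p I (Finset.mem_powerset.1 hA h)
  rw [Finset.card_insert_of_notMem hpA, hinsert, pow_succ]
  ring

theorem suppFn_mem_MAXn_of_finrank_vectorSpan_le {m : ℕ} (S : Finset (Vec n))
    (hS : finrank ℝ (vectorSpan ℝ (S : Set (Vec n))) ≤ m) :
    suppFn ↑S ∈ MAXn n (m + 1) := by
  classical
  induction S using Finset.strongInduction with
  | H S ih =>
  by_cases hcard : S.card ≤ m + 1
  · exact suppFn_mem_MAXn_of_card_le S hcard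
  have hdep : ¬ AffineIndependent ℝ ((↑) : S → Vec n) := fun hind => by
    have hrange : Set.range ((↑) : S → Vec n) = ↑S := Subtype.range_coe
    have hle := hind.card_le_finrank_succ
    rw [Fintype.card_coe] at hle
    have := Submodule.finrank_mono (congrArg (vectorSpan ℝ) hrange).le
    omega
  obtain ⟨I, hIS, hIJ⟩ := Finset.exists_convexHull_inter_convexHull_sdiff_nonempty hdep
  have hdecomp : suppFn ↑S = ∑ A ∈ I.powerset.erase I,
      (-(-1 : ℝ) ^ I.card * (-1) ^ A.card) • suppFn (↑(A ∪ (S \ I)) : Set (Vec n)) := by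
    ext x
    obtain ⟨p, hp, q, hq, hpq⟩ := exists_dotProduct_le_of_convexHull_inter_nonempty hIJ x
    have h0 := sum_powerset_neg_one_pow_mul_suppFn_union_eq_zero hp hq hpq
    rw [← Finset.add_sum_erase _ _ (Finset.mem_powerset_self I),
      Finset.union_sdiff_of_subset hIS] at h0
    have hsq : ((-1 : ℝ) ^ I.card) ^ 2 = 1 := by rw [← pow_mul, pow_mul', neg_one_sq, one_pow]
    simp only [Finset.sum_apply, Pi.smul_apply, smul_eq_mul, mul_assoc, ← Finset.mul_sum]
    linear_combination (-1 : ℝ) ^ I.card * h0 - suppFn (↑S) x * hsq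
  have hssub : ∀ A ∈ I.powerset.erase I, A ∪ (S \ I) ⊂ S := by
    intro A hA
    rw [Finset.mem_erase, Finset.mem_powerset] at hA
    obtain ⟨p, hpI, hpA⟩ :=
      Finset.exists_of_ssubset (Finset.ssubset_iff_subset_ne.2 ⟨hA.2, hA.1⟩)
    refine (Finset.ssubset_iff_of_subset
      (Finset.union_subset (hA.2.trans hIS) Finset.sdiff_subset)).2 ⟨p, hIS hpI, ?_⟩
    simp [hpA, hpI]
  rw [hdecomp]
  refine Submodule.sum_mem (maxSubmodule n (m + 1)) fun A hA =>
    Submodule.smul_mem _ _ (ih _ (hssub A hA) ?_)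
  exact (Submodule.finrank_mono (vectorSpan_mono ℝ (Finset.coe_subset.2 (hssub A hA).1))).trans hS

/-- A set `A` here stands for the polytope `convexHull ℝ A`, which has the same support
function `suppFn A`. -/
def pointSets (U : Submodule ℝ (Vec n)) : AddSubmonoid (Set (Vec n)) where
  carrier := {A | A.Finite ∧ A.Nonempty ∧ vectorSpan ℝ A ≤ U}
  zero_mem' := ⟨Set.finite_zero, Set.zero_nonempty, by simp [← Set.singleton_zero]⟩
  add_mem' := fun ⟨hA, hA₀, hAU⟩ ⟨hB, hB₀, hBU⟩ =>
    ⟨hA.add hB, hA₀.add hB₀, (vectorSpan_add_le _ _).trans (sup_le hAU hBU)⟩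

theorem smul_mem_pointSets {U : Submodule ℝ (Vec n)} (c : ℝ) {A : Set (Vec n)}
    (hA : A ∈ pointSets U) : c • A ∈ pointSets U :=
  ⟨hA.1.smul_set, hA.2.1.smul_set, (vectorSpan_smul_le c A).trans hA.2.2⟩

theorem pointSets_mono {U V : Submodule ℝ (Vec n)} (h : U ≤ V) : pointSets U ≤ pointSets V :=
  fun _ hA => ⟨hA.1, hA.2.1, hA.2.2.trans h⟩

theorem suppFn_add_of_mem_pointSets {U : Submodule ℝ (Vec n)} {A B : Set (Vec n)}
    (hA : A ∈ pointSets U) (hB : B ∈ pointSets U) : suppFn (A + B) = suppFn A + suppFn B :=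
  suppFn_add hA.1 hA.2.1 hB.1 hB.2.1

/-- Support functions `f_P - f_Q` of the virtual polytopes `P - Q` with `P, Q` parallel to `U`. -/
def suppDiff (U : Submodule ℝ (Vec n)) : Submodule ℝ (Vec n → ℝ) where
  carrier := {g | ∃ P ∈ pointSets U, ∃ Q ∈ pointSets U, g = suppFn P - suppFn Q}
  zero_mem' := ⟨0, zero_mem _, 0, zero_mem _, (sub_self _).symm⟩
  add_mem' := by
    rintro _ _ ⟨P, hP, Q, hQ, rfl⟩ ⟨P', hP', Q', hQ', rfl⟩
    refine ⟨P + P', add_mem hP hP', Q + Q', add_mem hQ hQ', ?_⟩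
    rw [suppFn_add_of_mem_pointSets hP hP', suppFn_add_of_mem_pointSets hQ hQ']
    abel
  smul_mem' := by
    rintro c _ ⟨P, hP, Q, hQ, rfl⟩
    rcases le_total 0 c with hc | hc
    · refine ⟨c • P, smul_mem_pointSets c hP, c • Q, smul_mem_pointSets c hQ, ?_⟩
      rw [suppFn_smul hc, suppFn_smul hc, smul_sub]
    · refine ⟨(-c) • Q, smul_mem_pointSets _ hQ, (-c) • P, smul_mem_pointSets _ hP, ?_⟩
      rw [suppFn_smul (neg_nonneg.2 hc), suppFn_smul (neg_nonneg.2 hc)]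
      module

theorem suppDiff_mono {U V : Submodule ℝ (Vec n)} (h : U ≤ V) : suppDiff U ≤ suppDiff V := by
  rintro _ ⟨P, hP, Q, hQ, rfl⟩
  exact ⟨P, pointSets_mono h hP, Q, pointSets_mono h hQ, rfl⟩

theorem dotProduct_mem_suppDiff (v : Vec n) : (fun x => ∑ i, v i * x i) ∈ suppDiff ⊥ := by
  refine ⟨{v}, ⟨Set.finite_singleton v, Set.singleton_nonempty v, by simp⟩,
    {0}, ⟨Set.finite_singleton 0, Set.singleton_nonempty 0, by simp⟩, ?_⟩
  rw [suppFn_singleton, suppFn_singleton]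
  ext x
  simp [dotProduct]

theorem iSup_mem_suppDiff {ι : Type*} [Fintype ι] [Nonempty ι] {U : Submodule ℝ (Vec n)}
    {g : ι → Vec n → ℝ} (hg : ∀ i, g i ∈ suppDiff U) :
    ∃ W : Submodule ℝ (Vec n), finrank ℝ W + 1 ≤ Fintype.card ι ∧
      (fun x => ⨆ i, g i x) ∈ suppDiff (U ⊔ W) := by
  classical
  choose P hP Q hQ hg using hg
  -- `f_P - f_Q = f_{P + R} - f_{Q + R}` gives every `g i` the common subtrahend `f_T`.
  set T := ∑ k, Q k
  set P' := fun i => P i + ∑ k ∈ Finset.univ.erase i, Q k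
  have hQ' : ∀ i, ∑ k ∈ Finset.univ.erase i, Q k ∈ pointSets U := fun i =>
    sum_mem fun k _ => hQ k
  have hP' : ∀ i, P' i ∈ pointSets U := fun i => add_mem (hP i) (hQ' i)
  have hgP' : ∀ i, g i = suppFn (P' i) - suppFn T := by
    intro i
    have hT : T = Q i + ∑ k ∈ Finset.univ.erase i, Q k :=
      (Finset.add_sum_erase _ _ (Finset.mem_univ i)).symm
    rw [hg i, hT, suppFn_add_of_mem_pointSets (hP i) (hQ' i),
      suppFn_add_of_mem_pointSets (hQ i) (hQ' i)]
    abel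
  choose b hb using fun i => (hP' i).2.1
  refine ⟨vectorSpan ℝ (Set.range b), finrank_vectorSpan_range_add_one_le ℝ b, ⋃ i, P' i,
    ⟨Set.finite_iUnion fun i => (hP' i).1,
      Set.nonempty_iUnion.2 ⟨Classical.arbitrary ι, _, hb _⟩,
      vectorSpan_iUnion_le (fun i => (hP' i).2.2) hb⟩,
    T, pointSets_mono le_sup_left (sum_mem fun k _ => hQ k), ?_⟩
  ext x
  simp only [hgP', Pi.sub_apply, sub_eq_add_neg,
    suppFn_iUnion (fun i => (hP' i).1) fun i => ⟨b i, hb i⟩]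
  exact ((OrderIso.addRight _).map_ciSup (Set.finite_range _).bddAbove).symm

theorem suppDiff_le_maxSubmodule {U : Submodule ℝ (Vec n)} {m : ℕ} (hU : finrank ℝ U ≤ m) :
    suppDiff U ≤ maxSubmodule n (m + 1) := by
  have hsupp : ∀ A ∈ pointSets U, suppFn A ∈ maxSubmodule n (m + 1) := fun A hA => by
    obtain ⟨S, rfl⟩ := hA.1.exists_finset_coe
    exact suppFn_mem_MAXn_of_finrank_vectorSpan_le S ((Submodule.finrank_mono hA.2.2).trans hU)
  rintro _ ⟨P, hP, Q, hQ, rfl⟩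
  exact sub_mem (hsupp P hP) (hsupp Q hQ)

theorem mval_succ (d r : ℕ → ℕ) (ℓ : ℕ) :
    mval d r (ℓ + 1) = d (ℓ + 1) * mval d r ℓ + (r (ℓ + 1) - 1) := by
  rw [mval, mval, Finset.sum_Icc_succ_top (by omega),
    Finset.Icc_eq_empty_of_lt (Nat.lt_succ_self (ℓ + 1)), Finset.prod_empty, mul_one,
    Finset.mul_sum]
  congr 1
  refine Finset.sum_congr rfl fun k hk => ?_
  rw [Finset.prod_Icc_succ_top (by have := (Finset.mem_Icc.1 hk).2; omega)]
  ring

theorem exists_mem_suppDiff_of_mem_Nhat {d r : ℕ → ℕ} (hr : ∀ k, 1 ≤ r k) {ℓ : ℕ}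
    {g : Vec n → ℝ} (hg : g ∈ Nhat n d r ℓ) :
    ∃ U : Submodule ℝ (Vec n), finrank ℝ U ≤ mval d r ℓ ∧ g ∈ suppDiff U := by
  induction ℓ generalizing g with
  | zero =>
    obtain ⟨v, rfl⟩ := hg
    exact ⟨⊥, by simp, dotProduct_mem_suppDiff v⟩
  | succ k ih =>
    obtain ⟨α, G, hG, rfl⟩ := hg
    choose U hU hGU using fun j => ih (hG j)
    have : Nonempty (Fin (r (k + 1))) := ⟨⟨0, hr _⟩⟩
    have hrow : ∀ i, (fun x => ∑ j, α i j * G j x) ∈ suppDiff (⨆ j, U j) := fun i => by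
      have hsum : (fun x => ∑ j, α i j * G j x) = ∑ j, α i j • G j := by
        ext x
        simp [Finset.sum_apply]
      rw [hsum]
      exact sum_mem fun j _ => Submodule.smul_mem _ _ (suppDiff_mono (le_iSup U j) (hGU j))
    obtain ⟨W, hW, hmem⟩ := iSup_mem_suppDiff hrow
    refine ⟨_, ?_, hmem⟩
    rw [Fintype.card_fin] at hW
    have hsumU : ∑ j, finrank ℝ (U j) ≤ d (k + 1) * mval d r k := by
      simpa using Finset.sum_le_card_nsmul Finset.univ _ _ fun j _ => hU j
    calc finrank ℝ ↥((⨆ j, U j) ⊔ W) ≤ finrank ℝ ↥(⨆ j, U j) + finrank ℝ W :=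
          Submodule.finrank_add_le_finrank_add_finrank _ _
      _ ≤ d (k + 1) * mval d r k + (r (k + 1) - 1) := by
          have := Submodule.finrank_iSup_le_sum U
          omega
      _ = mval d r (k + 1) := (mval_succ d r k).symm

theorem Nfull_subset_MAXn_general {n : ℕ} (ℓ : ℕ) (d r : ℕ → ℕ) (hr : ∀ k, 1 ≤ r k) :
    Nfull n d r ℓ ⊆ MAXn n (mval d r ℓ + 1) := by
  rintro _ ⟨p, c, g, hg, rfl⟩
  have hsum : (fun x => ∑ i, c i * g i x) = ∑ i, c i • g i := by
    ext x
    simp [Finset.sum_apply]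
  rw [hsum]
  refine sum_mem fun i _ => Submodule.smul_mem (maxSubmodule n (mval d r ℓ + 1)) _ ?_
  obtain ⟨U, hU, hgU⟩ := exists_mem_suppDiff_of_mem_Nhat hr (hg i)
  exact suppDiff_le_maxSubmodule hU hgU

/-- `N_n(ℓ,d,r) ⊆ MAX_n(m_ℓ + 1)`. -/
theorem Nfull_subset_MAXn {n : ℕ} (ℓ : ℕ) (d r : ℕ → ℕ) (hd1 : d 1 = n)
    (hd : ∀ k, 1 ≤ d k) (hr : ∀ k, 1 ≤ r k) :
    Nfull n d r ℓ ⊆ MAXn n (mval d r ℓ + 1) :=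
  Nfull_subset_MAXn_general ℓ d r hr
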